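/- arXiv:2002.01004 — 10 statements merged into one kernel-verified Lean document; each statement's English description precedes it below -/
import Mathlib

section
/- For fixed r ≥ 2, the function f_r(x) = (1/r)‖x‖^r on a real inner product space is uniformly convex of degree r with parameter σ_r = 2^{2−r}, i.e. f_r(y) ≥ f_r(x) + ⟨∇f_r(x), y−x⟩ + (2^{2−r}/r)‖y−x‖^r for all x, y. -/
/-!
After computing `∇ f_r(x) = ‖x‖^(r-2) x`, write `A = ‖x‖`, `t = ‖y - x‖`, `s = ⟪x, y - x⟫`, so that
`‖y‖² = A² + 2s + t²` and `|s| ≤ A t`; the claim becomes the scalar inequality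
`A^r + r A^(r-2) s + 2^(2-r) t^r ≤ (A² + 2s + t²)^(r/2)`.
As `q ↦ q^(r/2)` is convex, the right side is bounded below by its tangent line at `q = a²`,
for any `a ≥ 0`. When `t ≤ 2A` take `a = A`: the surplus `(r/2) A^(r-2) t²` dominates
`2^(2-r) t^r`. When `t ≥ 2A` take `a = t - A`, the tangent point of the extreme case `s = -A t`,
and use `A^(r-2) ≤ (t - A)^(r-2)`; what remains is a one-variable inequality in `t`, which holds
at `t = 2A` and whose derivative is nonnegative by the power mean inequality
`((a + b) / 2)^(r-1) ≤ (a^(r-1) + b^(r-1)) / 2`.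
-/

open Real Set
open scoped RealInnerProductSpace

lemma rpow_add_le_two_rpow_mul_add_rpow {p a b : ℝ} (hp : 1 ≤ p) (ha : 0 ≤ a) (hb : 0 ≤ b) :
    (a + b) ^ p ≤ 2 ^ (p - 1) * (a ^ p + b ^ p) := by
  exact_mod_cast NNReal.rpow_add_le_mul_rpow_add_rpow ⟨a, ha⟩ ⟨b, hb⟩ hp

lemma rpow_add_mul_sub_le_rpow {p u q : ℝ} (hp : 1 ≤ p) (hu : 0 ≤ u) (hq : 0 ≤ q) :
    u ^ p + p * u ^ (p - 1) * (q - u) ≤ q ^ p := by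
  rcases hu.eq_or_lt with rfl | hu
  · rcases hp.eq_or_lt with rfl | hp
    · simp
    · rw [zero_rpow (by positivity), zero_rpow (by linarith)]
      simpa using rpow_nonneg hq p
  · have bernoulli := one_add_mul_self_le_rpow_one_add
      (by linarith [div_nonneg hq hu.le] : -1 ≤ q / u - 1) hp
    rw [add_sub_cancel, div_rpow hq hu.le, le_div_iff₀ (rpow_pos_of_pos hu p)] at bernoulli
    calc u ^ p + p * u ^ (p - 1) * (q - u) = (1 + p * (q / u - 1)) * u ^ p := by
          rw [rpow_sub hu, rpow_one]
          field_simp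
      _ ≤ q ^ p := bernoulli

lemma rpow_add_mul_sq_sub_sq_le_rpow {r a b : ℝ} (hr : 2 ≤ r) (ha : 0 ≤ a) (hb : 0 ≤ b) :
    a ^ r + r / 2 * a ^ (r - 2) * (b ^ 2 - a ^ 2) ≤ b ^ r := by
  have sq_rpow : ∀ {c : ℝ}, 0 ≤ c → ∀ e : ℝ, (c ^ 2) ^ (e / 2) = c ^ e := fun hc e => by
    rw [← rpow_natCast_mul hc]
    push_cast
    ring_nf
  have h := rpow_add_mul_sub_le_rpow (by linarith : 1 ≤ r / 2) (sq_nonneg a) (sq_nonneg b)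
  rwa [sq_rpow ha, sq_rpow hb, show r / 2 - 1 = (r - 2) / 2 by ring, sq_rpow ha] at h

lemma two_rpow_mul_rpow_le_of_le_two_mul {r A t : ℝ} (hr : 2 ≤ r) (ht : 0 ≤ t) (htA : t ≤ 2 * A) :
    2 ^ (2 - r) * t ^ r ≤ A ^ (r - 2) * t ^ 2 := by
  have hA : 0 ≤ A := by linarith
  have two_pow : (2 : ℝ) ^ (2 - r) * 2 ^ (r - 2) = 1 := by
    rw [← rpow_add two_pos, show 2 - r + (r - 2) = 0 by ring, rpow_zero]
  calc 2 ^ (2 - r) * t ^ r = 2 ^ (2 - r) * t ^ (r - 2) * t ^ 2 := by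
        rw [mul_assoc, ← rpow_two, ← rpow_add' ht (by linarith), sub_add_cancel]
    _ ≤ 2 ^ (2 - r) * (2 * A) ^ (r - 2) * t ^ 2 := by gcongr
    _ = A ^ (r - 2) * t ^ 2 := by rw [mul_rpow zero_le_two hA, ← mul_assoc, two_pow, one_mul]

lemma two_rpow_mul_rpow_le_of_two_mul_le {r A t : ℝ} (hr : 2 ≤ r) (hA : 0 ≤ A) (ht : 2 * A ≤ t) :
    2 ^ (2 - r) * t ^ r ≤ (t - A) ^ r + r * A ^ (r - 1) * t - A ^ r := by
  set f : ℝ → ℝ := fun u => (u - A) ^ r + r * A ^ (r - 1) * u - 2 ^ (2 - r) * u ^ r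
  have hmono : MonotoneOn f (Ici (2 * A)) := by
    refine monotoneOn_of_hasDerivWithinAt_nonneg (convex_Ici _) ?_ (fun u hu => ?_) (fun u hu => ?_)
      (f' := fun u => r * (u - A) ^ (r - 1) + r * A ^ (r - 1) - 2 ^ (2 - r) * (r * u ^ (r - 1)))
    · have := continuous_rpow_const (by linarith : (0 : ℝ) ≤ r)
      fun_prop
    · rw [interior_Ici, mem_Ioi] at hu
      have h := ((((hasDerivAt_id u).sub_const A).rpow_const (p := r)
        (Or.inl (sub_pos.2 (show A < u by linarith)).ne')).add
        ((hasDerivAt_id u).const_mul (r * A ^ (r - 1)))).sub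
        ((hasDerivAt_rpow_const (p := r) (Or.inl (show 0 < u by linarith).ne')).const_mul
          (2 ^ (2 - r)))
      exact (h.congr_deriv (by simp only [id]; ring)).hasDerivWithinAt
    · rw [interior_Ici, mem_Ioi] at hu
      have mean := rpow_add_le_two_rpow_mul_add_rpow (by linarith : 1 ≤ r - 1)
        (by linarith : 0 ≤ u - A) hA
      have two_pow : 2 ^ (2 - r) * 2 ^ (r - 1 - 1) = (1 : ℝ) := by
        rw [← rpow_add two_pos, show 2 - r + (r - 1 - 1) = 0 by ring, rpow_zero]
      have : 2 ^ (2 - r) * u ^ (r - 1) ≤ (u - A) ^ (r - 1) + A ^ (r - 1) := by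
        calc 2 ^ (2 - r) * u ^ (r - 1) = 2 ^ (2 - r) * (u - A + A) ^ (r - 1) := by
              rw [sub_add_cancel]
          _ ≤ 2 ^ (2 - r) * (2 ^ (r - 1 - 1) * ((u - A) ^ (r - 1) + A ^ (r - 1))) := by gcongr
          _ = (u - A) ^ (r - 1) + A ^ (r - 1) := by rw [← mul_assoc, two_pow, one_mul]
      have := mul_le_mul_of_nonneg_left this (by linarith : (0 : ℝ) ≤ r)
      linarith
  have f_two_mul : f (2 * A) = (2 * r - 3) * A ^ r := by
    have h1 : A ^ (r - 1) * A = A ^ r := by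
      rw [← rpow_add_one' hA (by linarith), sub_add_cancel]
    have h2 : (2 : ℝ) ^ (2 - r) * 2 ^ r = 4 := by
      rw [← rpow_add two_pos, sub_add_cancel]; norm_num
    simp only [f, show 2 * A - A = A by ring, mul_rpow zero_le_two hA]
    linear_combination 2 * r * h1 - A ^ r * h2
  have key := hmono self_mem_Ici (mem_Ici.2 ht) ht
  have : A ^ r ≤ (2 * r - 3) * A ^ r := le_mul_of_one_le_left (rpow_nonneg hA r) (by linarith)
  simp only [f_two_mul, f] at key
  linarith

lemma rpow_add_mul_add_two_rpow_le {r A t s B : ℝ} (hr : 2 ≤ r) (hA : 0 ≤ A) (ht : 0 ≤ t)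
    (hB : 0 ≤ B) (hs : |s| ≤ A * t) (hB2 : B ^ 2 = A ^ 2 + 2 * s + t ^ 2) :
    A ^ r + r * A ^ (r - 2) * s + 2 ^ (2 - r) * t ^ r ≤ B ^ r := by
  rcases le_total t (2 * A) with htA | htA
  · have tangent := rpow_add_mul_sq_sub_sq_le_rpow hr hA hB
    have small := two_rpow_mul_rpow_le_of_le_two_mul hr ht htA
    have : A ^ (r - 2) * t ^ 2 ≤ r / 2 * (A ^ (r - 2) * t ^ 2) :=
      le_mul_of_one_le_left (mul_nonneg (rpow_nonneg hA _) (sq_nonneg t)) (by linarith)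
    rw [hB2] at tangent
    linarith
  · have tangent := rpow_add_mul_sq_sub_sq_le_rpow hr (by linarith : 0 ≤ t - A) hB
    rw [hB2, show A ^ 2 + 2 * s + t ^ 2 - (t - A) ^ 2 = 2 * (s + A * t) by ring] at tangent
    have large := two_rpow_mul_rpow_le_of_two_mul_le hr hA htA
    rw [show r - 1 = r - 2 + 1 by ring, rpow_add_one' hA (by linarith)] at large
    have : r * A ^ (r - 2) * (s + A * t) ≤ r / 2 * (t - A) ^ (r - 2) * (2 * (s + A * t)) := by
      have hst : 0 ≤ s + A * t := by linarith [neg_abs_le s]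
      calc r * A ^ (r - 2) * (s + A * t) ≤ r * (t - A) ^ (r - 2) * (s + A * t) := by
            gcongr
            linarith
          _ = _ := by ring
    linarith

lemma hasGradientAt_one_div_mul_norm_rpow {E : Type*} [NormedAddCommGroup E]
    [InnerProductSpace ℝ E] [CompleteSpace E] {r : ℝ} (hr : 1 < r) (x : E) :
    HasGradientAt (fun z : E => 1 / r * ‖z‖ ^ r) (‖x‖ ^ (r - 2) • x) x := by
  rw [hasGradientAt_iff_hasFDerivAt]
  refine ((hasFDerivAt_norm_rpow x hr).const_mul (1 / r)).congr_fderiv ?_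
  ext v
  simp only [one_div, smul_apply, coe_innerSL_apply, smul_eq_mul, map_smul,
    InnerProductSpace.toDual_apply_apply]
  field_simp

theorem pow_norm_uniformly_convex
    {E : Type*} [NormedAddCommGroup E] [InnerProductSpace ℝ E] [CompleteSpace E]
    (r : ℝ) (hr : 2 ≤ r) (x y : E) :
    (1 / r) * ‖x‖ ^ r + ⟪gradient (fun z : E => (1 / r) * ‖z‖ ^ r) x, y - x⟫
        + ((2 : ℝ) ^ (2 - r) / r) * ‖y - x‖ ^ r
      ≤ (1 / r) * ‖y‖ ^ r := by
  rw [(hasGradientAt_one_div_mul_norm_rpow (by linarith) x).gradient, real_inner_smul_left]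
  have h := rpow_add_mul_add_two_rpow_le hr (norm_nonneg x) (norm_nonneg (y - x)) (norm_nonneg y)
    (abs_real_inner_le_norm x (y - x)) (by rw [← norm_add_sq_real, add_sub_cancel])
  have hr0 : 0 < r := by linarith
  calc 1 / r * ‖x‖ ^ r + ‖x‖ ^ (r - 2) * ⟪x, y - x⟫ + 2 ^ (2 - r) / r * ‖y - x‖ ^ r
      = 1 / r * (‖x‖ ^ r + r * ‖x‖ ^ (r - 2) * ⟪x, y - x⟫ + 2 ^ (2 - r) * ‖y - x‖ ^ r) := by
        field_simp
    _ ≤ 1 / r * ‖y‖ ^ r := by gcongr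
end

section
/- Let f have L_q-Lipschitz q-th derivative and g have L_p-Lipschitz p-th derivative, h proper closed convex, F = f + g + h. Let T = T(x) be any minimizer over y of Ω_q(f,x;y) + H_q/(q+1)!·‖y−x‖^{q+1} + Ω_p(g,x;y) + H_p/(p+1)!·‖y−x‖^{p+1} + h(y), with H_q ≥ qL_q and H_p ≥ pL_p. Then F(T(x)) ≤ min_y { F(y) + (H_q+L_q)/(q+1)!·‖y−x‖^{q+1} + (H_p+L_p)/(p+1)!·‖y−x‖^{p+1} }. -/
/-!
The Taylor error term `L/(n+1)! ‖z - x‖^(n+1)` bounds an absolute value, so it is nonnegative,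
hence at most `n` times itself and thus at most the regularization `H/(n+1)! ‖z - x‖^(n+1)`:
each regularized Taylor model lies above its function. At any `y` it exceeds the function by at
most `(H + L)/(n+1)! ‖y - x‖^(n+1)`. So `F(T x)` is at most the total model at `T x`, which by
minimality is at most the total model at `y`, which is at most the right-hand side.
-/

/-- `Ω_k(f,x;y)`: `k`-th order Taylor polynomial of `f` at `x`, evaluated at `y`. -/
noncomputable def omegaTaylor {E : Type*} [NormedAddCommGroup E] [NormedSpace ℝ E]
    (f : E → ℝ) (k : ℕ) (x y : E) : ℝ :=
  ∑ i ∈ Finset.range (k + 1), ((i.factorial : ℝ))⁻¹ * iteratedFDeriv ℝ i f x (fun _ => y - x)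

lemma mul_le_mul_of_natCast_mul_le {a b s : ℝ} {n : ℕ} (hn : 1 ≤ n) (hs : 0 ≤ s)
    (has : 0 ≤ a * s) (hab : n * a ≤ b) : a * s ≤ b * s := by
  have hn' : (1 : ℝ) ≤ n := by exact_mod_cast hn
  calc a * s ≤ n * (a * s) := le_mul_of_one_le_left has hn'
    _ = (n * a) * s := by ring
    _ ≤ b * s := mul_le_mul_of_nonneg_right hab hs

section TaylorModel

variable {E : Type*} [NormedAddCommGroup E] [NormedSpace ℝ E]

lemma le_omegaTaylor_add_regularization {f : E → ℝ} {n : ℕ} {L H : ℝ} {x y : E}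
    (hn : 1 ≤ n) (hf : |f y - omegaTaylor f n x y| ≤ L / (n + 1).factorial * ‖y - x‖ ^ (n + 1))
    (hLH : (n : ℝ) * L ≤ H) :
    f y ≤ omegaTaylor f n x y + H / (n + 1).factorial * ‖y - x‖ ^ (n + 1) := by
  have hLH' : (n : ℝ) * (L / (n + 1).factorial) ≤ H / (n + 1).factorial := by
    rw [← mul_div_assoc]
    gcongr
  have hreg := mul_le_mul_of_natCast_mul_le hn (by positivity) ((abs_nonneg _).trans hf) hLH'
  linarith [(abs_le.mp hf).2]

lemma omegaTaylor_le_add {f : E → ℝ} {n : ℕ} {L : ℝ} {x y : E}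
    (hf : |f y - omegaTaylor f n x y| ≤ L / (n + 1).factorial * ‖y - x‖ ^ (n + 1)) :
    omegaTaylor f n x y ≤ f y + L / (n + 1).factorial * ‖y - x‖ ^ (n + 1) := by
  linarith [(abs_le.mp hf).1]

end TaylorModel

theorem multi_composite_step_bound_general
    {E : Type*} [NormedAddCommGroup E] [NormedSpace ℝ E]
    (f g h : E → ℝ) (q p : ℕ) (Lq Lp Hq Hp : ℝ)
    (hq : 1 ≤ q) (hp : 1 ≤ p)
    (hfT : ∀ x y : E, |f y - omegaTaylor f q x y| ≤ Lq / (q + 1).factorial * ‖y - x‖ ^ (q + 1))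
    (hgT : ∀ x y : E, |g y - omegaTaylor g p x y| ≤ Lp / (p + 1).factorial * ‖y - x‖ ^ (p + 1))
    (hHq : (q : ℝ) * Lq ≤ Hq) (hHp : (p : ℝ) * Lp ≤ Hp)
    (T : E → E)
    (hT : ∀ x y : E,
      omegaTaylor f q x (T x) + Hq / (q + 1).factorial * ‖T x - x‖ ^ (q + 1)
        + omegaTaylor g p x (T x) + Hp / (p + 1).factorial * ‖T x - x‖ ^ (p + 1) + h (T x)
      ≤ omegaTaylor f q x y + Hq / (q + 1).factorial * ‖y - x‖ ^ (q + 1)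
        + omegaTaylor g p x y + Hp / (p + 1).factorial * ‖y - x‖ ^ (p + 1) + h y)
    (x y : E) :
    f (T x) + g (T x) + h (T x)
      ≤ f y + g y + h y + (Hq + Lq) / (q + 1).factorial * ‖y - x‖ ^ (q + 1)
        + (Hp + Lp) / (p + 1).factorial * ‖y - x‖ ^ (p + 1) := by
  have hf_model := le_omegaTaylor_add_regularization hq (hfT x (T x)) hHq
  have hg_model := le_omegaTaylor_add_regularization hp (hgT x (T x)) hHp
  have hf_y := omegaTaylor_le_add (hfT x y)
  have hg_y := omegaTaylor_le_add (hgT x y)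
  have hsplit_q : (Hq + Lq) / (q + 1).factorial * ‖y - x‖ ^ (q + 1)
      = Hq / (q + 1).factorial * ‖y - x‖ ^ (q + 1)
        + Lq / (q + 1).factorial * ‖y - x‖ ^ (q + 1) := by ring
  have hsplit_p : (Hp + Lp) / (p + 1).factorial * ‖y - x‖ ^ (p + 1)
      = Hp / (p + 1).factorial * ‖y - x‖ ^ (p + 1)
        + Lp / (p + 1).factorial * ‖y - x‖ ^ (p + 1) := by ring
  linarith [hT x y]

theorem multi_composite_step_bound
    {E : Type*} [NormedAddCommGroup E] [NormedSpace ℝ E] [FiniteDimensional ℝ E]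
    (f g h : E → ℝ) (q p : ℕ) (Lq Lp Hq Hp : ℝ)
    (hq : 1 ≤ q) (hp : 1 ≤ p)
    (hfT : ∀ x y : E, |f y - omegaTaylor f q x y| ≤ Lq / (q + 1).factorial * ‖y - x‖ ^ (q + 1))
    (hgT : ∀ x y : E, |g y - omegaTaylor g p x y| ≤ Lp / (p + 1).factorial * ‖y - x‖ ^ (p + 1))
    (hh : ConvexOn ℝ Set.univ h)
    (hHq : (q : ℝ) * Lq ≤ Hq) (hHp : (p : ℝ) * Lp ≤ Hp)
    (T : E → E)
    (hT : ∀ x y : E,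
      omegaTaylor f q x (T x) + Hq / (q + 1).factorial * ‖T x - x‖ ^ (q + 1)
        + omegaTaylor g p x (T x) + Hp / (p + 1).factorial * ‖T x - x‖ ^ (p + 1) + h (T x)
      ≤ omegaTaylor f q x y + Hq / (q + 1).factorial * ‖y - x‖ ^ (q + 1)
        + omegaTaylor g p x y + Hp / (p + 1).factorial * ‖y - x‖ ^ (p + 1) + h y)
    (x y : E) :
    f (T x) + g (T x) + h (T x)
      ≤ f y + g y + h y + (Hq + Lq) / (q + 1).factorial * ‖y - x‖ ^ (q + 1)
        + (Hp + Lp) / (p + 1).factorial * ‖y - x‖ ^ (p + 1) :=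
  multi_composite_step_bound_general f g h q p Lq Lp Hq Hp hq hp hfT hgT hHq hHp T hT x y
end

section
/- Under the multi-composite tensor step x_{t+1} = T(x_t) with F(T(x)) ≤ min_y {F(y) + C_f‖y−x‖^{q+1} + C_g‖y−x‖^{p+1}} and convex F, for step sizes α_0 = 1, α_t ∈ (0,1) for t ≥ 1, setting A_0 = 1 and A_t = Π_{i=1}^t (1−α_i), one has for all t ≥ 0: F(x_{t+1}) − F(x*) ≤ A_t · Σ_{i=0}^t [ C_f (α_i^{q+1}/A_i)‖x_i − x*‖^{q+1} + C_g (α_i^{p+1}/A_i)‖x_i − x*‖^{p+1} ]. -/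
/-!
Testing the step bound at the convex combination `(1 - αₜ) xₜ + αₜ x*` and using convexity gives
the contraction `eₜ₊₁ ≤ (1 - αₜ) eₜ + rₜ` for the gap `eₜ = F(xₜ) - F(x*)`, where `rₜ` is the
regularization term evaluated at `αₜ (x* - xₜ)`. Dividing by `Aₜ` telescopes this into
`eₜ₊₁ / Aₜ ≤ ∑ᵢ rᵢ / Aᵢ`; the choice `α₀ = 1` kills the initial gap.
-/

open Finset

theorem ConvexOn.sub_le_one_sub_mul_add_of_forall_le_add
    {E : Type*} [AddCommGroup E] [Module ℝ E] {F : E → ℝ} (hF : ConvexOn ℝ Set.univ F)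
    (R : E → ℝ) {x₀ x₁ : E} (hstep : ∀ y, F x₁ ≤ F y + R (y - x₀))
    (z : E) {a : ℝ} (ha₀ : 0 ≤ a) (ha₁ : a ≤ 1) :
    F x₁ - F z ≤ (1 - a) * (F x₀ - F z) + R (a • (z - x₀)) := by
  have hconv : F ((1 - a) • x₀ + a • z) ≤ (1 - a) * F x₀ + a * F z :=
    hF.2 (Set.mem_univ _) (Set.mem_univ _) (by linarith) ha₀ (by ring)
  have hy : (1 - a) • x₀ + a • z - x₀ = a • (z - x₀) := by module
  have := hstep ((1 - a) • x₀ + a • z)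
  rw [hy] at this
  linarith

theorem le_prod_mul_sum_div_prod_of_le_one_sub_mul_add {e r α : ℕ → ℝ}
    (hα₀ : α 0 = 1) (hα : ∀ i, 1 ≤ i → α i < 1)
    (he : ∀ s, e (s + 1) ≤ (1 - α s) * e s + r s) (t : ℕ) :
    e (t + 1) ≤ (∏ i ∈ Icc 1 t, (1 - α i)) *
      ∑ i ∈ range (t + 1), r i / ∏ j ∈ Icc 1 i, (1 - α j) := by
  have hpos : ∀ i, 0 < ∏ j ∈ Icc 1 i, (1 - α j) := fun i =>
    prod_pos fun j hj => sub_pos.2 (hα j (mem_Icc.1 hj).1)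
  induction t with
  | zero => simpa [hα₀] using he 0
  | succ n ih =>
    have hα' : 0 < 1 - α (n + 1) := sub_pos.2 (hα _ (Nat.le_add_left 1 n))
    have hprod : ∏ i ∈ Icc 1 (n + 1), (1 - α i) = (∏ i ∈ Icc 1 n, (1 - α i)) * (1 - α (n + 1)) :=
      prod_Icc_succ_top (Nat.le_add_left 1 n) _
    have hlast : (∏ i ∈ Icc 1 (n + 1), (1 - α i)) * (r (n + 1) / ∏ j ∈ Icc 1 (n + 1), (1 - α j))
        = r (n + 1) := mul_div_cancel₀ _ (hpos _).ne'
    calc e (n + 1 + 1)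
        ≤ (1 - α (n + 1)) * e (n + 1) + r (n + 1) := he (n + 1)
      _ ≤ (1 - α (n + 1)) * ((∏ i ∈ Icc 1 n, (1 - α i)) *
            ∑ i ∈ range (n + 1), r i / ∏ j ∈ Icc 1 i, (1 - α j)) + r (n + 1) := by gcongr
      _ = (∏ i ∈ Icc 1 (n + 1), (1 - α i)) *
            ∑ i ∈ range (n + 1 + 1), r i / ∏ j ∈ Icc 1 i, (1 - α j) := by
        rw [sum_range_succ _ (n + 1), mul_add, hlast, hprod]
        ring

theorem multi_composite_convergence_general
    {E : Type*} [NormedAddCommGroup E] [NormedSpace ℝ E]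
    (F : E → ℝ) (hF : ConvexOn ℝ Set.univ F)
    (xs : E)
    (q p : ℕ)
    (Cf Cg : ℝ)
    (x : ℕ → E) (α : ℕ → ℝ) (hα0 : α 0 = 1)
    (hα : ∀ t, 1 ≤ t → α t ∈ Set.Ioo (0 : ℝ) 1)
    (A : ℕ → ℝ) (hA : ∀ t, A t = ∏ i ∈ Finset.Icc 1 t, (1 - α i))
    (hstep : ∀ t (y : E),
      F (x (t + 1)) ≤ F y + Cf * ‖y - x t‖ ^ (q + 1) + Cg * ‖y - x t‖ ^ (p + 1))
    (t : ℕ) :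
    F (x (t + 1)) - F xs ≤ A t * ∑ i ∈ Finset.range (t + 1),
      (Cf * (α i) ^ (q + 1) / A i * ‖x i - xs‖ ^ (q + 1)
        + Cg * (α i) ^ (p + 1) / A i * ‖x i - xs‖ ^ (p + 1)) := by
  set R : E → ℝ := fun v => Cf * ‖v‖ ^ (q + 1) + Cg * ‖v‖ ^ (p + 1)
  have hα_mem : ∀ s, 0 ≤ α s ∧ α s ≤ 1 := by
    intro s
    rcases Nat.eq_zero_or_pos s with rfl | hs
    · simp [hα0]
    · exact ⟨(hα s hs).1.le, (hα s hs).2.le⟩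
  have hR : ∀ s, R (α s • (xs - x s)) =
      Cf * α s ^ (q + 1) * ‖x s - xs‖ ^ (q + 1) + Cg * α s ^ (p + 1) * ‖x s - xs‖ ^ (p + 1) := by
    intro s
    simp only [R, norm_smul, Real.norm_eq_abs, abs_of_nonneg (hα_mem s).1, norm_sub_rev, mul_pow,
      mul_assoc]
  have hdescent : ∀ s, F (x (s + 1)) - F xs ≤ (1 - α s) * (F (x s) - F xs) +
      (Cf * α s ^ (q + 1) * ‖x s - xs‖ ^ (q + 1) + Cg * α s ^ (p + 1) * ‖x s - xs‖ ^ (p + 1)) := by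
    intro s
    rw [← hR]
    exact hF.sub_le_one_sub_mul_add_of_forall_le_add R
      (fun y => by simpa only [R, add_assoc] using hstep s y) xs (hα_mem s).1 (hα_mem s).2
  have hrate := le_prod_mul_sum_div_prod_of_le_one_sub_mul_add (e := fun s => F (x s) - F xs)
    hα0 (fun i hi => (hα i hi).2) hdescent t
  simp only [← hA] at hrate
  convert hrate using 3 with i
  ring

theorem multi_composite_convergence
    {E : Type*} [NormedAddCommGroup E] [NormedSpace ℝ E]
    (F : E → ℝ) (hF : ConvexOn ℝ Set.univ F)
    (xs : E) (hxs : ∀ u, F xs ≤ F u)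
    (q p : ℕ) (hq : 1 ≤ q) (hp : 1 ≤ p)
    (Cf Cg : ℝ) (hCf : 0 < Cf) (hCg : 0 < Cg)
    (x : ℕ → E) (α : ℕ → ℝ) (hα0 : α 0 = 1)
    (hα : ∀ t, 1 ≤ t → α t ∈ Set.Ioo (0 : ℝ) 1)
    (A : ℕ → ℝ) (hA : ∀ t, A t = ∏ i ∈ Finset.Icc 1 t, (1 - α i))
    (hstep : ∀ t (y : E),
      F (x (t + 1)) ≤ F y + Cf * ‖y - x t‖ ^ (q + 1) + Cg * ‖y - x t‖ ^ (p + 1))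
    (t : ℕ) :
    F (x (t + 1)) - F xs ≤ A t * ∑ i ∈ Finset.range (t + 1),
      (Cf * (α i) ^ (q + 1) / A i * ‖x i - xs‖ ^ (q + 1)
        + Cg * (α i) ^ (p + 1) / A i * ‖x i - xs‖ ^ (p + 1)) :=
  multi_composite_convergence_general F hF xs q p Cf Cg x α hα0 hα A hA hstep t
end

section
/- For α_i = (p+1)/(i+p+1) and A_t = Π_{i=1}^t i/(i+p+1), the weighted sum satisfies Σ_{i=1}^t (A_t/A_i)·α_i^{p+1} ≤ (p+1)^{p+1}/(t+p+1)^p. -/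
/-! With `c_t = t/(t+p+1)` the sum `S_t` satisfies `S_{t+1} = c_{t+1} S_t + α_{t+1}^{p+1}`, so the
bound `B_t = (p+1)^{p+1}/(t+p+1)^p` propagates by induction as soon as
`c_{t+1} B_t + α_{t+1}^{p+1} ≤ B_{t+1}`. With `a = t+p+1` this reduces to
`(a-p)(a+1)^p ≤ a^{p+1}`, i.e. `(1 - p/a)(1 + 1/a)^p ≤ 1`, which follows from Bernoulli's
inequality `1 - p/a ≤ (1 - 1/a)^p` and `(1 - 1/a)(1 + 1/a) ≤ 1`. -/

open Finset

section DiscreteGronwall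

variable {K : Type*} [Field K] [LinearOrder K] [IsStrictOrderedRing K]

lemma sum_Icc_prod_div_mul_succ {c : ℕ → K} (f : ℕ → K) (hc : ∀ j, 1 ≤ j → 0 < c j) (t : ℕ) :
    ∑ i ∈ Icc 1 (t + 1), (∏ j ∈ Icc 1 (t + 1), c j) / (∏ j ∈ Icc 1 i, c j) * f i
      = c (t + 1) * ∑ i ∈ Icc 1 t, (∏ j ∈ Icc 1 t, c j) / (∏ j ∈ Icc 1 i, c j) * f i
        + f (t + 1) := by
  have hprod : (∏ j ∈ Icc 1 (t + 1), c j) ≠ 0 :=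
    (prod_pos fun j hj => hc j (mem_Icc.mp hj).1).ne'
  rw [sum_Icc_succ_top (by omega), div_self hprod, one_mul, prod_Icc_succ_top (by omega), mul_sum]
  congr 1
  exact sum_congr rfl fun i _ => by ring

lemma sum_Icc_prod_div_mul_le {c f B : ℕ → K} (hc : ∀ j, 1 ≤ j → 0 < c j) (hB : 0 ≤ B 0)
    (hstep : ∀ t, c (t + 1) * B t + f (t + 1) ≤ B (t + 1)) (t : ℕ) :
    ∑ i ∈ Icc 1 t, (∏ j ∈ Icc 1 t, c j) / (∏ j ∈ Icc 1 i, c j) * f i ≤ B t := by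
  induction t with
  | zero => simpa using hB
  | succ t ih =>
    rw [sum_Icc_prod_div_mul_succ f hc]
    calc _ ≤ c (t + 1) * B t + f (t + 1) := by
          gcongr
          exact (hc _ le_add_self).le
      _ ≤ B (t + 1) := hstep t

end DiscreteGronwall

lemma sub_mul_add_one_pow_le_pow_succ (p : ℕ) {a : ℝ} (ha : 1 ≤ a) :
    (a - p) * (a + 1) ^ p ≤ a ^ (p + 1) := by
  set u := a⁻¹
  have hu0 : 0 < u := by positivity
  have hu1 : u ≤ 1 := inv_le_one_of_one_le₀ ha
  have hau : a * u = 1 := mul_inv_cancel₀ (by positivity)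
  have bernoulli : 1 - p * u ≤ (1 - u) ^ p := by
    simpa [sub_eq_add_neg] using one_add_mul_le_pow (a := -u) (by linarith) p
  have hsq : (1 - u) ^ p * (1 + u) ^ p ≤ 1 := by
    rw [← mul_pow]
    exact pow_le_one₀ (by nlinarith) (by nlinarith)
  calc (a - p) * (a + 1) ^ p = a ^ (p + 1) * ((1 - p * u) * (1 + u) ^ p) := by
        rw [show a - p = a * (1 - p * u) by linear_combination (↑p : ℝ) * hau,
          show a + 1 = a * (1 + u) by linear_combination -hau, mul_pow]
        ring
    _ ≤ a ^ (p + 1) * ((1 - u) ^ p * (1 + u) ^ p) := by gcongr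
    _ ≤ a ^ (p + 1) := mul_le_of_le_one_right (by positivity) hsq

lemma weighted_sum_bound_step (p : ℕ) {a : ℝ} (ha : 1 ≤ a) :
    (a - p) / (a + 1) * ((p + 1) ^ (p + 1) / a ^ p) + ((p + 1) / (a + 1)) ^ (p + 1)
      ≤ (p + 1) ^ (p + 1) / (a + 1) ^ p := by
  have ha0 : 0 < a := by linarith
  calc _ = (p + 1) ^ (p + 1) * ((a - p) * (a + 1) ^ p + a ^ p) / ((a + 1) ^ (p + 1) * a ^ p) := by
        rw [div_pow]
        field_simp
        ring
    _ ≤ (p + 1) ^ (p + 1) * (a ^ (p + 1) + a ^ p) / ((a + 1) ^ (p + 1) * a ^ p) := by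
        gcongr
        exact sub_mul_add_one_pow_le_pow_succ p ha
    _ = (p + 1) ^ (p + 1) / (a + 1) ^ p := by
        field_simp
        ring

theorem weighted_sum_bound_p_general (p t : ℕ) :
    ∑ i ∈ Finset.Icc 1 t,
        ((∏ j ∈ Finset.Icc 1 t, ((j : ℝ) / (j + p + 1)))
            / (∏ j ∈ Finset.Icc 1 i, ((j : ℝ) / (j + p + 1))))
          * ((p + 1 : ℝ) / (i + p + 1)) ^ (p + 1)
      ≤ (p + 1 : ℝ) ^ (p + 1) / (t + p + 1 : ℝ) ^ p := by
  refine sum_Icc_prod_div_mul_le (c := fun j => (j : ℝ) / (j + p + 1))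
    (f := fun i => ((p + 1 : ℝ) / (i + p + 1)) ^ (p + 1))
    (B := fun t => (p + 1 : ℝ) ^ (p + 1) / (t + p + 1) ^ p) (fun j hj => ?_) (by positivity)
    (fun t => ?_) t
  · have : (0 : ℝ) < j := by exact_mod_cast hj
    positivity
  · have hstep := weighted_sum_bound_step p (a := t + p + 1) (le_add_of_nonneg_left (by positivity))
    rw [show (t : ℝ) + p + 1 - p = t + 1 by ring] at hstep
    push_cast
    rwa [show (t : ℝ) + 1 + p + 1 = t + p + 1 + 1 by ring]

theorem weighted_sum_bound_p (p t : ℕ) (hp : 1 ≤ p) (ht : 1 ≤ t) :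
    ∑ i ∈ Finset.Icc 1 t,
        ((∏ j ∈ Finset.Icc 1 t, ((j : ℝ) / (j + p + 1)))
            / (∏ j ∈ Finset.Icc 1 i, ((j : ℝ) / (j + p + 1))))
          * ((p + 1 : ℝ) / (i + p + 1)) ^ (p + 1)
      ≤ (p + 1 : ℝ) ^ (p + 1) / (t + p + 1 : ℝ) ^ p :=
  weighted_sum_bound_p_general p t
end

section
/- For integers 1 ≤ q ≤ p, α_i = (p+1)/(i+p+1) and A_t = Π_{i=1}^t i/(i+p+1), the weighted sum satisfies Σ_{i=1}^t (A_t/A_i)·α_i^{q+1} ≤ (p+1)^{q+1}/(t+p+1)^q. -/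
/-!
Writing `S t` for the sum and `B t = (p+1)^(q+1) / (t+p+1)^q` for the bound, the sum obeys the
recursion `S (t+1) = (t+1)/(t+p+2) * S t + α_{t+1}^(q+1)` with `S 0 = 0 ≤ B 0`, so by induction it
suffices that `B` is a supersolution: `(t+1)/(t+p+2) * B t + α_{t+1}^(q+1) ≤ B (t+1)`. Clearing
denominators this is `(t+1) (a+1)^q ≤ a^(q+1)` with `a = t+p+1`, which follows from the Bernoulli-type
estimate `(a+1)^q (a+1-q) ≤ a^q (a+1)` together with `q ≤ p`.
-/

open Finset

theorem sum_Icc_div_prod_mul_succ {K : Type*} [Field K] (f g : ℕ → K) (t : ℕ)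
    (h : ∏ j ∈ Icc 1 (t + 1), f j ≠ 0) :
    ∑ i ∈ Icc 1 (t + 1), (∏ j ∈ Icc 1 (t + 1), f j) / (∏ j ∈ Icc 1 i, f j) * g i
      = f (t + 1) * ∑ i ∈ Icc 1 t, (∏ j ∈ Icc 1 t, f j) / (∏ j ∈ Icc 1 i, f j) * g i
        + g (t + 1) := by
  rw [sum_Icc_succ_top (by omega), div_self h, one_mul, prod_Icc_succ_top (by omega), mul_sum]
  congr 1
  exact sum_congr rfl fun i _ => by ring

theorem pow_mul_add_one_sub_le (a : ℝ) (ha : 0 ≤ a) (n : ℕ) :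
    (a + 1) ^ n * (a + 1 - n) ≤ a ^ n * (a + 1) := by
  induction n with
  | zero => simp
  | succ n ih =>
    push_cast
    have h : (a + 1) * (a - n) ≤ a * (a + 1 - n) := by nlinarith [(n.cast_nonneg : (0 : ℝ) ≤ n)]
    calc (a + 1) ^ (n + 1) * (a + 1 - (n + 1)) = (a + 1) ^ n * ((a + 1) * (a - n)) := by ring
      _ ≤ (a + 1) ^ n * (a * (a + 1 - n)) := by gcongr
      _ = a * ((a + 1) ^ n * (a + 1 - n)) := by ring
      _ ≤ a * (a ^ n * (a + 1)) := by gcongr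
      _ = a ^ (n + 1) * (a + 1) := by ring

theorem mul_pow_le_pow_succ (x r : ℝ) (n : ℕ) (hx : 0 ≤ x) (hn : n ≤ r) :
    (x + 1) * (x + r + 2) ^ n ≤ (x + r + 1) ^ (n + 1) := by
  set a := x + r + 1
  have ha : 0 ≤ a := by linarith [n.cast_nonneg (α := ℝ)]
  have h : (x + 1) * (a + 1) ≤ a * (a + 1 - n) := by nlinarith
  have key : (x + 1) * (a + 1) ^ n * (a + 1) ≤ a ^ (n + 1) * (a + 1) :=
    calc (x + 1) * (a + 1) ^ n * (a + 1) = (a + 1) ^ n * ((x + 1) * (a + 1)) := by ring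
      _ ≤ (a + 1) ^ n * (a * (a + 1 - n)) := by gcongr
      _ = a * ((a + 1) ^ n * (a + 1 - n)) := by ring
      _ ≤ a * (a ^ n * (a + 1)) := mul_le_mul_of_nonneg_left (pow_mul_add_one_sub_le a ha n) ha
      _ = a ^ (n + 1) * (a + 1) := by ring
  rw [show x + r + 2 = a + 1 by ring]
  exact le_of_mul_le_mul_right key (by linarith)

theorem bound_step (x r : ℝ) (n : ℕ) (hx : 0 ≤ x) (hr : 0 ≤ r)
    (h : (x + 1) * (x + r + 2) ^ n ≤ (x + r + 1) ^ (n + 1)) :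
    (x + 1) / (x + r + 2) * ((r + 1) ^ (n + 1) / (x + r + 1) ^ n)
        + ((r + 1) / (x + r + 2)) ^ (n + 1)
      ≤ (r + 1) ^ (n + 1) / (x + r + 2) ^ n := by
  set A := x + r + 1
  have hB : x + r + 2 = A + 1 := by ring
  rw [hB]
  have hA : 0 < A := by positivity
  have h' : (x + 1) * (A + 1) ^ n / A ^ n ≤ A := by
    rw [div_le_iff₀ (by positivity), ← pow_succ']
    rwa [hB] at h
  calc (x + 1) / (A + 1) * ((r + 1) ^ (n + 1) / A ^ n) + ((r + 1) / (A + 1)) ^ (n + 1)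
      = (r + 1) ^ (n + 1) / (A + 1) ^ (n + 1) * ((x + 1) * (A + 1) ^ n / A ^ n + 1) := by
        rw [div_pow]; field_simp; ring
    _ ≤ (r + 1) ^ (n + 1) / (A + 1) ^ (n + 1) * (A + 1) := by gcongr
    _ = (r + 1) ^ (n + 1) / (A + 1) ^ n := by field_simp; ring

theorem weighted_sum_bound_q_general (p q t : ℕ) (hqp : q ≤ p) :
    ∑ i ∈ Finset.Icc 1 t,
        ((∏ j ∈ Finset.Icc 1 t, ((j : ℝ) / (j + p + 1)))
            / (∏ j ∈ Finset.Icc 1 i, ((j : ℝ) / (j + p + 1))))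
          * ((p + 1 : ℝ) / (i + p + 1)) ^ (q + 1)
      ≤ (p + 1 : ℝ) ^ (q + 1) / (t + p + 1 : ℝ) ^ q := by
  induction t with
  | zero => simp only [Icc_eq_empty_of_lt one_pos, sum_empty]; positivity
  | succ t ih =>
    have hprod : ∏ j ∈ Icc 1 (t + 1), ((j : ℝ) / (j + p + 1)) ≠ 0 :=
      prod_ne_zero_iff.mpr fun j hj => by have := (mem_Icc.mp hj).1; positivity
    have hqp' : (q : ℝ) ≤ p := by exact_mod_cast hqp
    rw [sum_Icc_div_prod_mul_succ _ (fun i : ℕ => ((p + 1 : ℝ) / (i + p + 1)) ^ (q + 1)) t hprod]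
    calc _ ≤ ((t + 1 : ℕ) : ℝ) / ((t + 1 : ℕ) + p + 1)
            * ((p + 1 : ℝ) ^ (q + 1) / (t + p + 1 : ℝ) ^ q)
          + ((p + 1 : ℝ) / ((t + 1 : ℕ) + p + 1)) ^ (q + 1) := by gcongr
      _ ≤ _ := by
        push_cast
        convert bound_step t p q t.cast_nonneg p.cast_nonneg
          (mul_pow_le_pow_succ t p q t.cast_nonneg hqp') using 2 <;> ring

theorem weighted_sum_bound_q (p q t : ℕ) (hq : 1 ≤ q) (hqp : q ≤ p) (ht : 1 ≤ t) :
    ∑ i ∈ Finset.Icc 1 t,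
        ((∏ j ∈ Finset.Icc 1 t, ((j : ℝ) / (j + p + 1)))
            / (∏ j ∈ Finset.Icc 1 i, ((j : ℝ) / (j + p + 1))))
          * ((p + 1 : ℝ) / (i + p + 1)) ^ (q + 1)
      ≤ (p + 1 : ℝ) ^ (q + 1) / (t + p + 1 : ℝ) ^ q :=
  weighted_sum_bound_q_general p q t hqp
end

section
/- With the estimate sequence ψ_k and iterates x_k = argmin ψ_k as above, for any x and any z_k: ψ_{k+1}(x) − A_{k+1}F(y_{k+1}) − (ψ_k(x_k) − A_k F(z_k)) ≥ A_{k+1}⟨∇f(y_{k+1}) + g'(y_{k+1}), (a_{k+1}/A_{k+1})x + (A_k/A_{k+1})z_k − y_{k+1}⟩ + (1/2)‖x − x_k‖². -/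
open scoped RealInnerProductSpace

/-!
Rescaling by `A = A_k + a` splits the inner product on the left into `a ⟪v, x - y⟫`, which
cancels against the linear part of `ψ_{k+1}`, and `A_k ⟪v, z_k - y⟫`, which the subgradient
inequality of `f + g` at `y` bounds by `A_k (F z_k - F y)`.
-/

lemma smul_convexCombination_sub {K V : Type*} [Field K] [AddCommGroup V] [Module K V]
    {a b A : K} (hA : A = b + a) (hA₀ : A ≠ 0) (x z y : V) :
    A • ((a / A) • x + (b / A) • z - y) = a • (x - y) + b • (z - y) := by
  have hy : A • y = a • y + b • y := by rw [hA, add_smul, add_comm]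
  rw [smul_sub, smul_add, smul_smul, smul_smul, mul_div_cancel₀ _ hA₀,
    mul_div_cancel₀ _ hA₀, hy, smul_sub, smul_sub]
  abel

lemma subgradient_inequality_add {E : Type*} [NormedAddCommGroup E] [InnerProductSpace ℝ E]
    {f g : E → ℝ} {y vf vg : E}
    (hf : ∀ z, f y + ⟪vf, z - y⟫ ≤ f z) (hg : ∀ z, g y + ⟪vg, z - y⟫ ≤ g z) (z : E) :
    f y + g y + ⟪vf + vg, z - y⟫ ≤ f z + g z := by
  rw [inner_add_left]
  linarith [hf z, hg z]

theorem estimate_sequence_step_lower_bound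
    {E : Type*} [NormedAddCommGroup E] [InnerProductSpace ℝ E]
    (f g : E → ℝ) (y1 zk xk : E) (vf vg : E)
    (hf : ∀ z, f y1 + ⟪vf, z - y1⟫ ≤ f z)
    (hg : ∀ z, g y1 + ⟪vg, z - y1⟫ ≤ g z)
    (a Ak A c : ℝ) (ha : 0 < a) (hAk : 0 ≤ Ak) (hA : A = Ak + a)
    (ψk1 : E → ℝ)
    (hψ : ∀ z, ψk1 z = c + 1 / 2 * ‖z - xk‖ ^ 2
        + a * ((f y1 + g y1) + ⟪vf + vg, z - y1⟫))
    (x : E) :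
    A * ⟪vf + vg, (a / A) • x + (Ak / A) • zk - y1⟫ + 1 / 2 * ‖x - xk‖ ^ 2
      ≤ ψk1 x - A * (f y1 + g y1) - (c - Ak * (f zk + g zk)) := by
  have hA₀ : A ≠ 0 := by rw [hA]; positivity
  have hsplit : A * ⟪vf + vg, (a / A) • x + (Ak / A) • zk - y1⟫
      = a * ⟪vf + vg, x - y1⟫ + Ak * ⟪vf + vg, zk - y1⟫ := by
    rw [← real_inner_smul_right, smul_convexCombination_sub hA hA₀, inner_add_right,
      real_inner_smul_right, real_inner_smul_right]
  have hzk : Ak * ⟪vf + vg, zk - y1⟫ ≤ Ak * (f zk + g zk - (f y1 + g y1)) :=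
    mul_le_mul_of_nonneg_left (by linarith [subgradient_inequality_add hf hg zk]) hAk
  rw [hsplit, hψ, hA]
  linarith
end

section
/- Let λ_{k+1} = a_{k+1}²/A_{k+1} and x̃_k = (a_{k+1}/A_{k+1})x_k + (A_k/A_{k+1})y_k. Then ψ_{k+1}(x_{k+1}) − A_{k+1}F(y_{k+1}) − (ψ_k(x_k) − A_k F(y_k)) ≥ (A_{k+1}/(2λ_{k+1}))·(‖y_{k+1} − x̃_k‖² − ‖y_{k+1} − (x̃_k − λ_{k+1}(∇f(y_{k+1}) + g'(y_{k+1})))‖²). Consequently, if each step satisfies ‖y_{k+1} − (x̃_k − λ_{k+1}(∇f(y_{k+1})+g'(y_{k+1})))‖ ≤ σ‖y_{k+1} − x̃_k‖ with σ ∈ [0,1], then ψ_k(x_k) − A_k F(y_k) ≥ ((1−σ²)/2) Σ_{i=1}^k (A_i/λ_i)‖y_i − x̃_{i−1}‖². -/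
open scoped RealInnerProductSpace

/-!
Adding an affine function `a * (c + ⟪v, · - y⟫)` to `ψ p + ½‖· - p‖²` gives again a function of
this form, centred at `p - a • v`; hence every `ψ k` equals `ψ k (x k) + ½‖· - x k‖²` and the value
`ψ (k + 1) (x (k + 1))` is explicit. Against it, the subgradient inequality of `F = f + g` between
`y k` and `y (k + 1)`, weighted by `A k`, and the term `a (k + 1) ⟪v, x k - y (k + 1)⟫` combine into
`A (k + 1) ⟪v, xt k - y (k + 1)⟫` (here `v = Gf (k + 1) + Gg (k + 1)`), and the identity for `‖w‖² - ‖w + λ v‖²` turns this into the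
claimed bound. Under the relative-error condition each step gains at least
`(1 - σ²) / 2 * A / λ * ‖y - xt‖²`, and these gains telescope.
-/

section InnerProductSpace

variable {E : Type*} [NormedAddCommGroup E] [InnerProductSpace ℝ E]

theorem norm_sub_sq_sub_norm_sub_sub_smul_sq (x y v : E) (t : ℝ) :
    ‖y - x‖ ^ 2 - ‖y - (x - t • v)‖ ^ 2 = t * (2 * ⟪v, x - y⟫ - t * ‖v‖ ^ 2) := by
  have hxy : y - (x - t • v) = (y - x) + t • v := by abel
  have hinner : ⟪y - x, v⟫ = -⟪v, x - y⟫ := by rw [real_inner_comm, ← inner_neg_right, neg_sub]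
  rw [hxy, norm_add_sq_real, real_inner_smul_right, norm_smul, Real.norm_eq_abs, mul_pow, sq_abs,
    hinner]
  ring

theorem apply_sub_smul_of_eq_add_affine {ψ ψ' : E → ℝ} {p v y : E} {a c : ℝ}
    (hψ : ∀ z, ψ z = ψ p + 1 / 2 * ‖z - p‖ ^ 2)
    (hψ' : ∀ z, ψ' z = ψ z + a * (c + ⟪v, z - y⟫)) :
    ψ' (p - a • v) = ψ p + a * (c + ⟪v, p - y⟫) - a ^ 2 / 2 * ‖v‖ ^ 2 := by
  have hinner : ⟪v, p - a • v - y⟫ = ⟪v, p - y⟫ - a * ‖v‖ ^ 2 := by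
    rw [sub_right_comm, inner_sub_right, real_inner_smul_right, real_inner_self_eq_norm_sq]
  rw [hψ', hψ, sub_sub_cancel_left, norm_neg, norm_smul, Real.norm_eq_abs, mul_pow, sq_abs, hinner]
  ring

theorem eq_apply_sub_smul_add_half_norm_sub_sq {ψ ψ' : E → ℝ} {p v y : E} {a c : ℝ}
    (hψ : ∀ z, ψ z = ψ p + 1 / 2 * ‖z - p‖ ^ 2)
    (hψ' : ∀ z, ψ' z = ψ z + a * (c + ⟪v, z - y⟫)) (z : E) :
    ψ' z = ψ' (p - a • v) + 1 / 2 * ‖z - (p - a • v)‖ ^ 2 := by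
  have hsq := norm_sub_sq_sub_norm_sub_sub_smul_sq p z v a
  have hinner : ⟪v, z - y⟫ = ⟪v, p - y⟫ - ⟪v, p - z⟫ := by
    rw [← inner_sub_right, sub_sub_sub_cancel_left]
  rw [apply_sub_smul_of_eq_add_affine hψ hψ', hψ', hψ z, hinner]
  linear_combination (1 / 2 : ℝ) * hsq

theorem eq_apply_add_half_norm_sub_sq_of_succ {ψ : ℕ → E → ℝ} {x y v : ℕ → E} {a c : ℕ → ℝ}
    (hψ0 : ∀ z, ψ 0 z = ψ 0 (x 0) + 1 / 2 * ‖z - x 0‖ ^ 2)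
    (hψ : ∀ k z, ψ (k + 1) z = ψ k z + a (k + 1) * (c (k + 1) + ⟪v (k + 1), z - y (k + 1)⟫))
    (hx : ∀ k, x (k + 1) = x k - a (k + 1) • v (k + 1)) :
    ∀ k z, ψ k z = ψ k (x k) + 1 / 2 * ‖z - x k‖ ^ 2 := by
  intro k
  induction k with
  | zero => exact hψ0
  | succ k ih => rw [hx k]; exact eq_apply_sub_smul_add_half_norm_sub_sq ih (hψ k)

theorem estimate_sequence_step_le {ψ ψ' F : E → ℝ} {p v y y' xt : E} {a A A' lam : ℝ}
    (hψ : ∀ z, ψ z = ψ p + 1 / 2 * ‖z - p‖ ^ 2)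
    (hψ' : ∀ z, ψ' z = ψ z + a * (F y' + ⟪v, z - y'⟫))
    (hsub : F y' + ⟪v, y - y'⟫ ≤ F y) (ha : 0 < a) (hA : 0 ≤ A) (hA' : A' = A + a)
    (hlam : lam = a ^ 2 / A') (hxt : xt = (a / A') • p + (A / A') • y) :
    A' / (2 * lam) * (‖y' - xt‖ ^ 2 - ‖y' - (xt - lam • v)‖ ^ 2)
      ≤ ψ' (p - a • v) - A' * F y' - (ψ p - A * F y) := by
  have hA'pos : 0 < A' := by linarith
  have hgap : A' / (2 * lam) * (‖y' - xt‖ ^ 2 - ‖y' - (xt - lam • v)‖ ^ 2)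
      = A' * ⟪v, xt - y'⟫ - a ^ 2 / 2 * ‖v‖ ^ 2 := by
    rw [norm_sub_sq_sub_norm_sub_sub_smul_sq, hlam]
    field_simp
  have hcomb : A' • (xt - y') = a • (p - y') + A • (y - y') := by
    rw [hxt, smul_sub, smul_add, smul_smul, smul_smul, mul_div_cancel₀ _ hA'pos.ne',
      mul_div_cancel₀ _ hA'pos.ne', hA', add_smul, smul_sub, smul_sub]
    abel
  have hinner : A' * ⟪v, xt - y'⟫ = a * ⟪v, p - y'⟫ + A * ⟪v, y - y'⟫ := by
    rw [← real_inner_smul_right, hcomb, inner_add_right, real_inner_smul_right,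
      real_inner_smul_right]
  rw [hgap, apply_sub_smul_of_eq_add_affine hψ hψ', hinner, hA']
  nlinarith [mul_le_mul_of_nonneg_left hsub hA]

end InnerProductSpace

theorem one_sub_sq_mul_le_of_le_mul {c σ u w : ℝ} (hc : 0 ≤ c) (hu : 0 ≤ u) (h : u ≤ σ * w) :
    (1 - σ ^ 2) / 2 * (c * w ^ 2) ≤ c / 2 * (w ^ 2 - u ^ 2) := by
  have hsq : u ^ 2 ≤ (σ * w) ^ 2 := pow_le_pow_left₀ hu h 2
  nlinarith

theorem sum_Icc_le_of_le_sub {Φ d : ℕ → ℝ} (h0 : 0 ≤ Φ 0) (h : ∀ k, d (k + 1) ≤ Φ (k + 1) - Φ k) :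
    ∀ k, ∑ i ∈ Finset.Icc 1 k, d i ≤ Φ k := by
  intro k
  induction k with
  | zero => simpa using h0
  | succ k ih =>
    rw [Finset.sum_Icc_succ_top (by omega)]
    linarith [h k]

theorem estimate_sequence_potential_decrease_general
    {E : Type*} [NormedAddCommGroup E] [InnerProductSpace ℝ E]
    (f g : E → ℝ) (x0 : E) (y : ℕ → E) (Gf Gg : ℕ → E)
    (hf : ∀ k z, f (y k) + ⟪Gf k, z - y k⟫ ≤ f z)
    (hg : ∀ k z, g (y k) + ⟪Gg k, z - y k⟫ ≤ g z)
    (a : ℕ → ℝ) (ha : ∀ k, 1 ≤ k → 0 < a k)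
    (A lam : ℕ → ℝ)
    (hA : ∀ k, A k = ∑ i ∈ Finset.Icc 1 k, a i)
    (hlam : ∀ k, 1 ≤ k → lam k = (a k) ^ 2 / A k)
    (x : ℕ → E) (hx : ∀ k, x k = x0 - ∑ i ∈ Finset.Icc 1 k, a i • (Gf i + Gg i))
    (xt : ℕ → E)
    (hxt : ∀ k, xt k = (a (k + 1) / A (k + 1)) • x k + (A k / A (k + 1)) • y k)
    (ψ : ℕ → E → ℝ)
    (hψ0 : ∀ z, ψ 0 z = 1 / 2 * ‖z - x0‖ ^ 2)
    (hψ : ∀ k z, ψ (k + 1) z = ψ k z + a (k + 1) *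
        ((f (y (k + 1)) + g (y (k + 1))) + ⟪Gf (k + 1) + Gg (k + 1), z - y (k + 1)⟫))
    (σ : ℝ) :
    (∀ k, A (k + 1) / (2 * lam (k + 1)) *
        (‖y (k + 1) - xt k‖ ^ 2
          - ‖y (k + 1) - (xt k - lam (k + 1) • (Gf (k + 1) + Gg (k + 1)))‖ ^ 2)
      ≤ ψ (k + 1) (x (k + 1)) - A (k + 1) * (f (y (k + 1)) + g (y (k + 1)))
          - (ψ k (x k) - A k * (f (y k) + g (y k))))
    ∧ ((∀ k, ‖y (k + 1) - (xt k - lam (k + 1) • (Gf (k + 1) + Gg (k + 1)))‖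
          ≤ σ * ‖y (k + 1) - xt k‖)
      → ∀ k, (1 - σ ^ 2) / 2 * ∑ i ∈ Finset.Icc 1 k, A i / lam i * ‖y i - xt (i - 1)‖ ^ 2
          ≤ ψ k (x k) - A k * (f (y k) + g (y k))) := by
  have hA0 : A 0 = 0 := by simp [hA]
  have hA_succ (k : ℕ) : A (k + 1) = A k + a (k + 1) := by
    rw [hA, hA, Finset.sum_Icc_succ_top (by omega)]
  have hA_nonneg (k : ℕ) : 0 ≤ A k :=
    hA k ▸ Finset.sum_nonneg fun i hi => (ha i (Finset.mem_Icc.mp hi).1).le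
  have hx0 : x 0 = x0 := by simp [hx]
  have hx_succ (k : ℕ) : x (k + 1) = x k - a (k + 1) • (Gf (k + 1) + Gg (k + 1)) := by
    rw [hx, hx, Finset.sum_Icc_succ_top (by omega), sub_add_eq_sub_sub]
  have hquad := eq_apply_add_half_norm_sub_sq_of_succ (ψ := ψ) (y := y) (v := fun k => Gf k + Gg k)
    (c := fun k => f (y k) + g (y k))
    (fun z => by rw [hψ0, hψ0, hx0, sub_self, norm_zero]; ring) hψ hx_succ
  have hsub (k : ℕ) : f (y (k + 1)) + g (y (k + 1)) + ⟪Gf (k + 1) + Gg (k + 1), y k - y (k + 1)⟫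
      ≤ f (y k) + g (y k) := by
    linarith [hf (k + 1) (y k), hg (k + 1) (y k), inner_add_left (𝕜 := ℝ) (Gf (k + 1)) (Gg (k + 1))
      (y k - y (k + 1))]
  have hstep (k : ℕ) := hx_succ k ▸ estimate_sequence_step_le (F := fun z => f z + g z) (hquad k)
    (hψ k) (hsub k) (ha (k + 1) (by omega)) (hA_nonneg k) (hA_succ k) (hlam (k + 1) (by omega))
    (hxt k)
  refine ⟨hstep, fun hrel k => ?_⟩
  rw [Finset.mul_sum]
  refine sum_Icc_le_of_le_sub (Φ := fun k => ψ k (x k) - A k * (f (y k) + g (y k)))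
    (by simp [hψ0, hx0, hA0]) (fun k => le_trans ?_ (hstep k)) k
  have hlam_nonneg : 0 ≤ lam (k + 1) := by
    rw [hlam (k + 1) (by omega)]
    exact div_nonneg (sq_nonneg _) (hA_nonneg _)
  rw [mul_comm 2, ← div_div]
  exact one_sub_sq_mul_le_of_le_mul (div_nonneg (hA_nonneg _) hlam_nonneg) (norm_nonneg _) (hrel k)

theorem estimate_sequence_potential_decrease
    {E : Type*} [NormedAddCommGroup E] [InnerProductSpace ℝ E]
    (f g : E → ℝ) (x0 : E) (y : ℕ → E) (Gf Gg : ℕ → E)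
    (hf : ∀ k z, f (y k) + ⟪Gf k, z - y k⟫ ≤ f z)
    (hg : ∀ k z, g (y k) + ⟪Gg k, z - y k⟫ ≤ g z)
    (a : ℕ → ℝ) (ha : ∀ k, 1 ≤ k → 0 < a k)
    (A lam : ℕ → ℝ)
    (hA : ∀ k, A k = ∑ i ∈ Finset.Icc 1 k, a i)
    (hlam : ∀ k, 1 ≤ k → lam k = (a k) ^ 2 / A k)
    (x : ℕ → E) (hx : ∀ k, x k = x0 - ∑ i ∈ Finset.Icc 1 k, a i • (Gf i + Gg i))
    (xt : ℕ → E)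
    (hxt : ∀ k, xt k = (a (k + 1) / A (k + 1)) • x k + (A k / A (k + 1)) • y k)
    (ψ : ℕ → E → ℝ)
    (hψ0 : ∀ z, ψ 0 z = 1 / 2 * ‖z - x0‖ ^ 2)
    (hψ : ∀ k z, ψ (k + 1) z = ψ k z + a (k + 1) *
        ((f (y (k + 1)) + g (y (k + 1))) + ⟪Gf (k + 1) + Gg (k + 1), z - y (k + 1)⟫))
    (σ : ℝ) (hσ : σ ∈ Set.Icc (0 : ℝ) 1) :
    (∀ k, A (k + 1) / (2 * lam (k + 1)) *
        (‖y (k + 1) - xt k‖ ^ 2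
          - ‖y (k + 1) - (xt k - lam (k + 1) • (Gf (k + 1) + Gg (k + 1)))‖ ^ 2)
      ≤ ψ (k + 1) (x (k + 1)) - A (k + 1) * (f (y (k + 1)) + g (y (k + 1)))
          - (ψ k (x k) - A k * (f (y k) + g (y k))))
    ∧ ((∀ k, ‖y (k + 1) - (xt k - lam (k + 1) • (Gf (k + 1) + Gg (k + 1)))‖
          ≤ σ * ‖y (k + 1) - xt k‖)
      → ∀ k, (1 - σ ^ 2) / 2 * ∑ i ∈ Finset.Icc 1 k, A i / lam i * ‖y i - xt (i - 1)‖ ^ 2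
          ≤ ψ k (x k) - A k * (f (y k) + g (y k))) :=
  estimate_sequence_potential_decrease_general f g x0 y Gf Gg hf hg a ha A lam hA hlam x hx xt hxt ψ
    hψ0 hψ σ
end

section
/- Suppose y_{k+1} exactly minimizes y ↦ Ω_p(f, x̃_k; y) + (L_p(p+1)/(p+1)!)‖y − x̃_k‖^{p+1} + g(y) and the step size λ_{k+1} satisfies 1/2 ≤ λ_{k+1}·L_p‖y_{k+1} − x̃_k‖^{p−1}/(p−1)! ≤ p/(p+1). Then ‖y_{k+1} − (x̃_k − λ_{k+1}(∇f(y_{k+1}) + g'(y_{k+1})))‖ ≤ (1/2)‖y_{k+1} − x̃_k‖. -/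
/-!
Substituting the optimality condition for `vg`, the residual becomes
`(1 - λc) • (y₁ - x̃) + λ • (vf - gΩ)` with `c = L (p+1)/p! ‖y₁ - x̃‖^(p-1)`. Writing
`T = λ L ‖y₁ - x̃‖^(p-1)/(p-1)!`, one has `λc = (p+1)/p · T ≤ 1` by the upper step-size bound,
and the Taylor estimate bounds `λ ‖vf - gΩ‖` by `T/p · ‖y₁ - x̃‖`. The triangle inequality then
gives `(1 - T) ‖y₁ - x̃‖`, which is at most half of `‖y₁ - x̃‖` by the lower step-size bound.
-/

open Nat

lemma sub_sub_smul_add_eq_of_add_smul_add_eq_zero {E : Type*} [AddCommGroup E] [Module ℝ E]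
    {xt y1 vf vg gΩ : E} {c : ℝ} (lam : ℝ) (hopt : gΩ + c • (y1 - xt) + vg = 0) :
    y1 - (xt - lam • (vf + vg)) = (1 - lam * c) • (y1 - xt) + lam • (vf - gΩ) := by
  rw [eq_neg_iff_add_eq_zero.mpr ((add_comm _ _).trans hopt)]
  module

lemma norm_one_sub_smul_add_smul_le {E : Type*} [SeminormedAddCommGroup E] [NormedSpace ℝ E]
    (r w : E) {a lam B : ℝ} (ha : a ≤ 1) (hlam : 0 ≤ lam) (hw : ‖w‖ ≤ B) :
    ‖(1 - a) • r + lam • w‖ ≤ (1 - a) * ‖r‖ + lam * B := by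
  refine (norm_add_le _ _).trans ?_
  rw [norm_smul, norm_smul, Real.norm_of_nonneg (sub_nonneg.mpr ha), Real.norm_of_nonneg hlam]
  gcongr

section StepSize

variable {p : ℕ} (hp : p ≠ 0) (lam L s : ℝ)
include hp

lemma mul_div_factorial_succ_mul_pow_pred :
    lam * (L * (p + 1) / p ! * s ^ (p - 1)) = (p + 1) / p * (lam * L * s ^ (p - 1) / (p - 1)!) := by
  rw [← mul_factorial_pred hp]
  have : (p : ℝ) ≠ 0 := by exact_mod_cast hp
  push_cast
  field_simp

lemma mul_div_factorial_mul_pow :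
    lam * (L / p ! * s ^ p) = lam * L * s ^ (p - 1) / (p - 1)! / p * s := by
  rw [← mul_factorial_pred hp, ← pow_sub_one_mul hp]
  have : (p : ℝ) ≠ 0 := by exact_mod_cast hp
  push_cast
  field_simp

end StepSize

theorem exact_tensor_step_contraction
    {E : Type*} [NormedAddCommGroup E] [InnerProductSpace ℝ E]
    (p : ℕ) (hp : 1 ≤ p) (Lp lam : ℝ) (hLp : 0 < Lp)
    (xt y1 vf vg gΩ : E)
    (htaylor : ‖vf - gΩ‖ ≤ Lp / p.factorial * ‖y1 - xt‖ ^ p)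
    (hopt : gΩ + (Lp * (p + 1) / p.factorial * ‖y1 - xt‖ ^ (p - 1)) • (y1 - xt) + vg = 0)
    (hstep1 : 1 / 2 ≤ lam * Lp * ‖y1 - xt‖ ^ (p - 1) / (p - 1).factorial)
    (hstep2 : lam * Lp * ‖y1 - xt‖ ^ (p - 1) / (p - 1).factorial ≤ (p : ℝ) / (p + 1)) :
    ‖y1 - (xt - lam • (vf + vg))‖ ≤ 1 / 2 * ‖y1 - xt‖ := by
  have hp0 : p ≠ 0 := by omega
  set s := ‖y1 - xt‖
  generalize hT : lam * Lp * s ^ (p - 1) / (p - 1)! = T at hstep1 hstep2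
  have hlam : 0 ≤ lam := by
    refine (pos_of_mul_pos_left (b := Lp * s ^ (p - 1) / (p - 1)!) ?_ (by positivity)).le
    rw [← mul_div_assoc, ← mul_assoc, hT]
    linarith
  have hlc : lam * (Lp * (p + 1) / p ! * s ^ (p - 1)) ≤ 1 := by
    have : (0 : ℝ) < p := by exact_mod_cast hp
    rw [mul_div_factorial_succ_mul_pow_pred hp0, hT, div_mul_eq_mul_div, div_le_one this]
    have := (le_div_iff₀ (by positivity)).mp hstep2
    linarith
  rw [sub_sub_smul_add_eq_of_add_smul_add_eq_zero lam hopt]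
  calc _ ≤ (1 - lam * (Lp * (p + 1) / p ! * s ^ (p - 1))) * s + lam * (Lp / p ! * s ^ p) :=
        norm_one_sub_smul_add_smul_le _ _ hlc hlam htaylor
    _ = (1 - T) * s := by
        rw [mul_div_factorial_succ_mul_pow_pred hp0, mul_div_factorial_mul_pow hp0, hT]
        have : (p : ℝ) ≠ 0 := by exact_mod_cast hp0
        field_simp
        ring
    _ ≤ 1 / 2 * s := by gcongr; linarith
end

section
/- Suppose ỹ_{k+1} is an inexact solution of the regularized Taylor subproblem with gradient residual Ξ_{k+1} = ∇(Ω_p(f,x̃_k;·) + (L_p/p!)‖·−x̃_k‖^{p+1} + g)(ỹ_{k+1}) satisfying ‖Ξ_{k+1}‖ ≤ (L_p/(2p!))‖ỹ_{k+1} − x̃_k‖^p, and 1/2 ≤ λ_{k+1}·L_p‖ỹ_{k+1} − x̃_k‖^{p−1}/(p−1)! ≤ p/(p+1). Then ‖ỹ_{k+1} − (x̃_k − λ_{k+1}(∇f(ỹ_{k+1}) + g'(ỹ_{k+1})))‖ ≤ (3/4)‖ỹ_{k+1} − x̃_k‖. -/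
/-!
Substituting `g'(ỹ) = Ξ - ∇Ω - c (ỹ - x̃)` from the optimality condition, the residual splits as
`(1 - λc)(ỹ - x̃) + λ(∇f(ỹ) - ∇Ω) + λΞ`. With `η = λ L_p ‖ỹ - x̃‖^{p-1} / (p-1)!` one has
`λc = η (p+1)/p`, and the Taylor and inexactness bounds turn the last two terms into
`(η/p)‖ỹ - x̃‖` and `(η/(2p))‖ỹ - x̃‖`; the resulting coefficient is at most `3/4` on `[1/2, p/(p+1)]`.
-/

open Nat

theorem norm_sub_sub_smul_add_le {E : Type*} [NormedAddCommGroup E] [NormedSpace ℝ E]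
    {x y vf vg gΩ Ξ : E} {c lam : ℝ} (hopt : gΩ + c • (y - x) + vg = Ξ) :
    ‖y - (x - lam • (vf + vg))‖ ≤ |1 - lam * c| * ‖y - x‖ + |lam| * ‖vf - gΩ‖ + |lam| * ‖Ξ‖ := by
  have hsplit : y - (x - lam • (vf + vg)) = (1 - lam * c) • (y - x) + lam • (vf - gΩ) + lam • Ξ := by
    rw [← hopt]; module
  rw [hsplit]
  simpa only [norm_smul, Real.norm_eq_abs] using
    norm_add₃_le (a := (1 - lam * c) • (y - x)) (b := lam • (vf - gΩ)) (c := lam • Ξ)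

theorem contraction_coeff_le {p η : ℝ} (hp : 0 < p) (hη₁ : 1 / 2 ≤ η) (hη₂ : η ≤ p / (p + 1)) :
    η / p + |η * (p + 1) / p - 1| + η / (2 * p) ≤ 3 / 4 := by
  have hp₁ : 1 ≤ p := by
    rw [le_div_iff₀ (by linarith)] at hη₂; nlinarith
  have hle : η * (p + 1) / p ≤ 1 := by
    rw [div_le_one hp, ← le_div_iff₀ (by linarith)]; exact hη₂
  rw [abs_of_nonpos (by linarith), neg_sub]
  have key : η / p + (1 - η * (p + 1) / p) + η / (2 * p) = 1 - η * (2 * p - 1) / (2 * p) := by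
    field_simp; ring
  rw [key, sub_le_comm, le_div_iff₀ (by positivity)]
  nlinarith

theorem inexact_tensor_step_contraction
    {E : Type*} [NormedAddCommGroup E] [InnerProductSpace ℝ E]
    (p : ℕ) (hp : 1 ≤ p) (Lp lam : ℝ) (hLp : 0 < Lp)
    (xt y1 vf vg gΩ Ξ : E)
    (htaylor : ‖vf - gΩ‖ ≤ Lp / p.factorial * ‖y1 - xt‖ ^ p)
    (hopt : gΩ + (Lp * (p + 1) / p.factorial * ‖y1 - xt‖ ^ (p - 1)) • (y1 - xt) + vg = Ξ)
    (hΞ : ‖Ξ‖ ≤ Lp / (2 * p.factorial) * ‖y1 - xt‖ ^ p)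
    (hstep1 : 1 / 2 ≤ lam * Lp * ‖y1 - xt‖ ^ (p - 1) / (p - 1).factorial)
    (hstep2 : lam * Lp * ‖y1 - xt‖ ^ (p - 1) / (p - 1).factorial ≤ (p : ℝ) / (p + 1)) :
    ‖y1 - (xt - lam • (vf + vg))‖ ≤ 3 / 4 * ‖y1 - xt‖ := by
  set r := ‖y1 - xt‖
  set η := lam * Lp * r ^ (p - 1) / (p - 1)!
  have hfac : (p ! : ℝ) = p * (p - 1)! := by exact_mod_cast (mul_factorial_pred (by omega)).symm
  have hpow : r ^ p = r ^ (p - 1) * r := (pow_sub_one_mul (by omega) r).symm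
  have hp₀ : (0 : ℝ) < p := by exact_mod_cast hp
  have hlam : 0 ≤ lam := by
    have hnum : 0 < lam * Lp * r ^ (p - 1) :=
      (div_pos_iff_of_pos_right (by positivity)).mp (by linarith : 0 < η)
    rw [mul_assoc] at hnum
    exact (pos_of_mul_pos_left hnum (by positivity)).le
  have hc : lam * (Lp * (p + 1) / p ! * r ^ (p - 1)) = η * (p + 1) / p := by
    rw [hfac]; simp only [η]; field_simp
  have htay : |lam| * ‖vf - gΩ‖ ≤ η / p * r := by
    calc |lam| * ‖vf - gΩ‖ ≤ lam * (Lp / p ! * r ^ p) := by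
          rw [abs_of_nonneg hlam]; gcongr
      _ = η / p * r := by rw [hfac, hpow]; simp only [η]; field_simp
  have hres : |lam| * ‖Ξ‖ ≤ η / (2 * p) * r := by
    calc |lam| * ‖Ξ‖ ≤ lam * (Lp / (2 * p !) * r ^ p) := by
          rw [abs_of_nonneg hlam]; gcongr
      _ = η / (2 * p) * r := by rw [hfac, hpow]; simp only [η]; field_simp
  calc ‖y1 - (xt - lam • (vf + vg))‖
      ≤ |1 - lam * (Lp * (p + 1) / p ! * r ^ (p - 1))| * r + |lam| * ‖vf - gΩ‖ + |lam| * ‖Ξ‖ :=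
        norm_sub_sub_smul_add_le hopt
    _ ≤ (η / p + |η * (p + 1) / p - 1| + η / (2 * p)) * r := by
        rw [hc, abs_sub_comm]; linarith
    _ ≤ 3 / 4 * r := by
        gcongr
        exact contraction_coeff_le hp₀ hstep1 hstep2
end

section
/- If the restart radii satisfy R_{k+1} ≤ (r c_p L_p R_k^{p+1} / (σ_r N_k^{(3p+1)/2}))^{1/r} with N_k ≥ (r c_p L_p 2^r R_k^{p+1−r}/σ_r)^{2/(3p+1)}, then R_{k+1} ≤ R_k/2; i.e. the distance to the minimizer halves at each restart. -/
lemma mul_rpow_div_le_half_rpow {C D R r s : ℝ} (hR : 0 < R) (hD : 0 < D)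
    (h : C * 2 ^ r * R ^ (s - r) ≤ D) : C * R ^ s / D ≤ (R / 2) ^ r := by
  have hsplit : C * R ^ s = (R / 2) ^ r * (C * 2 ^ r * R ^ (s - r)) := by
    have h2r : (2 : ℝ) ^ r ≠ 0 := by positivity
    have hRr : R ^ r ≠ 0 := by positivity
    rw [Real.div_rpow hR.le zero_le_two, Real.rpow_sub hR]
    field_simp
  rw [div_le_iff₀ hD, hsplit]
  exact mul_le_mul_of_nonneg_left h (by positivity)

theorem restart_radius_halves_general
    (p r σr cp Lp Rk Rk1 Nk : ℝ)
    (hp : 1 ≤ p) (hr : 2 ≤ r)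
    (hσ : 0 < σr) (hcp : 0 < cp) (hLp : 0 < Lp) (hRk : 0 < Rk) (hNk : 0 < Nk)
    (hN : (r * cp * Lp * 2 ^ r * Rk ^ (p + 1 - r) / σr) ^ (2 / (3 * p + 1)) ≤ Nk)
    (hR : Rk1 ≤ (r * cp * Lp * Rk ^ (p + 1) / (σr * Nk ^ ((3 * p + 1) / 2))) ^ (1 / r)) :
    Rk1 ≤ Rk / 2 := by
  have hr0 : 0 < r := by linarith
  have hexp : 0 < (3 * p + 1) / 2 := by linarith
  have hNpow : r * cp * Lp * 2 ^ r * Rk ^ (p + 1 - r) / σr ≤ Nk ^ ((3 * p + 1) / 2) := by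
    rwa [← Real.rpow_inv_le_iff_of_pos (by positivity) hNk.le hexp, inv_div]
  have hbound : r * cp * Lp * Rk ^ (p + 1) / (σr * Nk ^ ((3 * p + 1) / 2)) ≤ (Rk / 2) ^ r :=
    mul_rpow_div_le_half_rpow hRk (by positivity) ((div_le_iff₀' hσ).1 hNpow)
  calc Rk1 ≤ (r * cp * Lp * Rk ^ (p + 1) / (σr * Nk ^ ((3 * p + 1) / 2))) ^ (1 / r) := hR
    _ ≤ Rk / 2 := by
      rwa [one_div, Real.rpow_inv_le_iff_of_pos (by positivity) (by positivity) hr0]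

theorem restart_radius_halves
    (p r σr cp Lp Rk Rk1 Nk : ℝ)
    (hp : 1 ≤ p) (hr : 2 ≤ r) (hrp : r ≤ p + 1)
    (hσ : 0 < σr) (hcp : 0 < cp) (hLp : 0 < Lp) (hRk : 0 < Rk) (hNk : 0 < Nk)
    (hN : (r * cp * Lp * 2 ^ r * Rk ^ (p + 1 - r) / σr) ^ (2 / (3 * p + 1)) ≤ Nk)
    (hR : Rk1 ≤ (r * cp * Lp * Rk ^ (p + 1) / (σr * Nk ^ ((3 * p + 1) / 2))) ^ (1 / r)) :
    Rk1 ≤ Rk / 2 :=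
  restart_radius_halves_general p r σr cp Lp Rk Rk1 Nk hp hr hσ hcp hLp hRk hNk hN hR
end
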